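/- For the bipartite component case of Theorem 1: let U induce a connected bipartite subgraph of G with partite sets A, B, τ ≡ 1 on U, and every vertex of N_G(U) has threshold equal to its degree in G. Define A' = N_G(B)\N_G[A], B' = N_G(A)\N_G[B], C = N_G(A)∩N_G(B). If X_t ∩ (A∪A'∪C) = ∅ for some t in the activation process, then X_{t+1} ∩ (B∪B'∪C) = ∅ and X_{t+2} ∩ (A∪A'∪C) = ∅; hence X_{t+2k} ∩ (A∪A'∪C) = ∅ for all k ≥ 0. -/

import Mathlib

open Finset

/-- The non-monotone activation process on `(G, τ)` starting with `X`:
`X_t = {u : |N_G(u) ∩ X_{t-1}| ≥ τ(u)}` for `t ≥ 1`. -/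
def activation {V : Type*} (G : SimpleGraph V) [Fintype V] [DecidableEq V]
    [DecidableRel G.Adj] (τ : V → ℤ) (X : Finset V) : ℕ → Finset V
  | 0 => X
  | t + 1 => Finset.univ.filter
      (fun u => τ u ≤ ((G.neighborFinset u ∩ activation G τ X t).card : ℤ))

/-- `X` is a non-monotone target set for `(G, τ)`. -/
def IsTargetSet {V : Type*} (G : SimpleGraph V) [Fintype V] [DecidableEq V]
    [DecidableRel G.Adj] (τ : V → ℤ) (X : Finset V) : Prop :=
  ∃ t₀ : ℕ, ∀ t ≥ t₀, activation G τ X t = Finset.univ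

/-- Open neighbourhood of a set of vertices: `N_G(S)`. -/
def openNbhd {V : Type*} (G : SimpleGraph V) (S : Set V) : Set V :=
  {v | v ∉ S ∧ ∃ u ∈ S, G.Adj u v}

/-- Closed neighbourhood of a set of vertices: `N_G[S]`. -/
def closedNbhd {V : Type*} (G : SimpleGraph V) (S : Set V) : Set V :=
  S ∪ openNbhd G S

/-- Closed neighbourhood, as a finset. -/
def closedNbhdFinset {V : Type*} (G : SimpleGraph V) [Fintype V] [DecidableEq V]
    [DecidableRel G.Adj] (U : Finset V) : Finset V :=
  U ∪ Finset.univ.filter (fun v => ∃ u ∈ U, G.Adj u v)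

/-- `U` is the vertex set of a connected component of the subgraph of `G` induced by `S`. -/
def IsComponentOf {V : Type*} (G : SimpleGraph V) (S U : Set V) : Prop :=
  U ⊆ S ∧ U.Nonempty ∧ (G.induce U).Connected ∧
    ∀ u ∈ U, ∀ v ∈ S, G.Adj u v → v ∈ U

/-- The subgraph of `G` induced by `S`, as a graph on the subtype `S`. -/
def restrict {V : Type*} (G : SimpleGraph V) (S : Set V) : SimpleGraph S where
  Adj a b := G.Adj a b
  symm := ⟨fun _ _ h => h.symm⟩
  loopless := ⟨fun _ h => h.ne rfl⟩

instance {V : Type*} (G : SimpleGraph V) (S : Set V) [h : DecidableRel G.Adj] :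
    DecidableRel (restrict G S).Adj := fun a b => inferInstanceAs (Decidable (G.Adj a b))

/-- The paper's `A ∪ A' ∪ C`, where `A' = N(B) \ N[A]` and `C = N(A) ∩ N(B)`. -/
def bipartiteSide {V : Type*} (G : SimpleGraph V) (A B : Set V) : Set V :=
  A ∪ (openNbhd G B \ closedNbhd G A) ∪ (openNbhd G A ∩ openNbhd G B)

section Activation

variable {V : Type*} [Fintype V] [DecidableEq V] {G : SimpleGraph V} [DecidableRel G.Adj]
  {τ : V → ℤ} {X : Finset V} {t : ℕ} {x : V}

theorem mem_activation_succ :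
    x ∈ activation G τ X (t + 1) ↔
      τ x ≤ ((G.neighborFinset x ∩ activation G τ X t).card : ℤ) := by
  simp [activation]

theorem exists_adj_mem_activation (hx : x ∈ activation G τ X (t + 1)) (hτ : 0 < τ x) :
    ∃ y, G.Adj x y ∧ y ∈ activation G τ X t := by
  have hpos : 0 < (G.neighborFinset x ∩ activation G τ X t).card := by
    exact_mod_cast hτ.trans_le (mem_activation_succ.mp hx)
  obtain ⟨y, hy⟩ := Finset.card_pos.mp hpos
  rw [Finset.mem_inter, SimpleGraph.mem_neighborFinset] at hy
  exact ⟨y, hy⟩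

theorem mem_activation_of_adj (hx : x ∈ activation G τ X (t + 1))
    (hτ : (G.degree x : ℤ) ≤ τ x) {y : V} (hxy : G.Adj x y) : y ∈ activation G τ X t := by
  have hcard : G.degree x ≤ (G.neighborFinset x ∩ activation G τ X t).card := by
    exact_mod_cast hτ.trans (mem_activation_succ.mp hx)
  rw [← G.card_neighborFinset_eq_degree] at hcard
  have hall := Finset.eq_of_subset_of_card_le Finset.inter_subset_left hcard
  have hy : y ∈ G.neighborFinset x ∩ activation G τ X t := by
    rw [hall, SimpleGraph.mem_neighborFinset]
    exact hxy
  exact (Finset.mem_inter.mp hy).2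

end Activation

section BipartiteSide

variable {V : Type*} {G : SimpleGraph V} {A B : Set V}

theorem bipartiteSide_swap :
    B ∪ (openNbhd G A \ closedNbhd G B) ∪ (openNbhd G A ∩ openNbhd G B) =
      bipartiteSide G B A := by
  rw [bipartiteSide, Set.inter_comm]

theorem mem_bipartiteSide_of_adj (hB : ∀ b ∈ B, ∀ b' ∈ B, ¬ G.Adj b b') {b y : V}
    (hb : b ∈ B) (hby : G.Adj b y) : y ∈ bipartiteSide G A B := by
  have hyB : y ∈ openNbhd G B := ⟨fun hy => hB b hb y hy hby, b, hb, hby⟩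
  by_cases hyA : y ∈ A
  · exact Or.inl (Or.inl hyA)
  by_cases hyNA : y ∈ openNbhd G A
  · exact Or.inr ⟨hyNA, hyB⟩
  · exact Or.inl (Or.inr ⟨hyB, fun h => h.elim hyA hyNA⟩)

theorem mem_openNbhd_of_mem_bipartiteSide {x : V} (hx : x ∈ bipartiteSide G B A)
    (hxB : x ∉ B) : x ∈ openNbhd G A := by
  rcases hx with (hxB' | hxA') | hxC
  · exact absurd hxB' hxB
  · exact hxA'.1
  · exact hxC.2

theorem mem_openNbhd_union_of_notMem {x : V} (hxA : x ∈ openNbhd G A) (hxB : x ∉ B) :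
    x ∈ openNbhd G (A ∪ B) :=
  ⟨fun h => h.elim hxA.1 hxB, hxA.2.imp fun _ ha => ⟨Or.inl ha.1, ha.2⟩⟩

end BipartiteSide

/-- A vertex of `B` needs an active neighbour, which lies in `A ∪ A' ∪ C`; a vertex of
`B' ∪ C` needs all its neighbours active, including one in `A`. -/
theorem notMem_bipartiteSide_activation_succ {V : Type*} [Fintype V] [DecidableEq V]
    {G : SimpleGraph V} [DecidableRel G.Adj] {τ : V → ℤ} {X : Finset V} {A B : Set V}
    (hB : ∀ b ∈ B, ∀ b' ∈ B, ¬ G.Adj b b') (hτB : ∀ b ∈ B, 0 < τ b)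
    (hτN : ∀ w ∈ openNbhd G (A ∪ B), (G.degree w : ℤ) ≤ τ w) {t : ℕ}
    (ht : ∀ x ∈ activation G τ X t, x ∉ bipartiteSide G A B) :
    ∀ x ∈ activation G τ X (t + 1), x ∉ bipartiteSide G B A := by
  intro x hx hside
  by_cases hxB : x ∈ B
  · obtain ⟨y, hxy, hy⟩ := exists_adj_mem_activation hx (hτB x hxB)
    exact ht y hy (mem_bipartiteSide_of_adj hB hxB hxy)
  · have hxA := mem_openNbhd_of_mem_bipartiteSide hside hxB
    have hdeg := hτN x (mem_openNbhd_union_of_notMem hxA hxB)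
    obtain ⟨-, a, ha, hax⟩ := hxA
    exact ht a (mem_activation_of_adj hx hdeg hax.symm) (Or.inl (Or.inl ha))

theorem stmt_19_general {V : Type*} [Fintype V] [DecidableEq V] (G : SimpleGraph V)
    [DecidableRel G.Adj] (τ : V → ℤ) (X₀ : Finset V) (U A B : Set V)
    (hUAB : U = A ∪ B)
    (hA : ∀ a ∈ A, ∀ a' ∈ A, ¬ G.Adj a a')
    (hB : ∀ b ∈ B, ∀ b' ∈ B, ¬ G.Adj b b')
    (hone : ∀ u ∈ U, τ u = 1)
    (hN : ∀ w ∈ openNbhd G U, τ w = (G.degree w : ℤ))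
    (t : ℕ)
    (hempty : ∀ x ∈ activation G τ X₀ t,
      x ∉ A ∪ (openNbhd G B \ closedNbhd G A) ∪ (openNbhd G A ∩ openNbhd G B)) :
    (∀ x ∈ activation G τ X₀ (t + 1),
      x ∉ B ∪ (openNbhd G A \ closedNbhd G B) ∪ (openNbhd G A ∩ openNbhd G B)) ∧
    (∀ x ∈ activation G τ X₀ (t + 2),
      x ∉ A ∪ (openNbhd G B \ closedNbhd G A) ∪ (openNbhd G A ∩ openNbhd G B)) ∧
    (∀ k : ℕ, ∀ x ∈ activation G τ X₀ (t + 2 * k),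
      x ∉ A ∪ (openNbhd G B \ closedNbhd G A) ∪ (openNbhd G A ∩ openNbhd G B)) := by
  subst hUAB
  have hτA : ∀ a ∈ A, 0 < τ a := fun a ha => by rw [hone a (Or.inl ha)]; exact one_pos
  have hτB : ∀ b ∈ B, 0 < τ b := fun b hb => by rw [hone b (Or.inr hb)]; exact one_pos
  have hτN : ∀ w ∈ openNbhd G (A ∪ B), (G.degree w : ℤ) ≤ τ w := fun w hw => (hN w hw).ge
  have hτN' : ∀ w ∈ openNbhd G (B ∪ A), (G.degree w : ℤ) ≤ τ w := by
    rwa [Set.union_comm]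
  have htwo : ∀ s, (∀ x ∈ activation G τ X₀ s, x ∉ bipartiteSide G A B) →
      ∀ x ∈ activation G τ X₀ (s + 2), x ∉ bipartiteSide G A B := fun s hs =>
    notMem_bipartiteSide_activation_succ hA hτA hτN'
      (notMem_bipartiteSide_activation_succ hB hτB hτN hs)
  refine ⟨?_, htwo t hempty, fun k => ?_⟩
  · rw [bipartiteSide_swap]
    exact notMem_bipartiteSide_activation_succ hB hτB hτN hempty
  · induction k with
    | zero => exact hempty
    | succ k ih => exact htwo _ ih

theorem stmt_19 {V : Type*} [Fintype V] [DecidableEq V] (G : SimpleGraph V)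
    [DecidableRel G.Adj] (τ : V → ℤ) (X₀ : Finset V) (U A B : Set V)
    (hUAB : U = A ∪ B) (hdisj : Disjoint A B)
    (hA : ∀ a ∈ A, ∀ a' ∈ A, ¬ G.Adj a a')
    (hB : ∀ b ∈ B, ∀ b' ∈ B, ¬ G.Adj b b')
    (hone : ∀ u ∈ U, τ u = 1)
    (hconn : (restrict G U).Connected)
    (hN : ∀ w ∈ openNbhd G U, τ w = (G.degree w : ℤ))
    (t : ℕ)
    (hempty : ∀ x ∈ activation G τ X₀ t,
      x ∉ A ∪ (openNbhd G B \ closedNbhd G A) ∪ (openNbhd G A ∩ openNbhd G B)) :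
    (∀ x ∈ activation G τ X₀ (t + 1),
      x ∉ B ∪ (openNbhd G A \ closedNbhd G B) ∪ (openNbhd G A ∩ openNbhd G B)) ∧
    (∀ x ∈ activation G τ X₀ (t + 2),
      x ∉ A ∪ (openNbhd G B \ closedNbhd G A) ∪ (openNbhd G A ∩ openNbhd G B)) ∧
    (∀ k : ℕ, ∀ x ∈ activation G τ X₀ (t + 2 * k),
      x ∉ A ∪ (openNbhd G B \ closedNbhd G A) ∪ (openNbhd G A ∩ openNbhd G B)) :=
  stmt_19_general G τ X₀ U A B hUAB hA hB hone hN t hempty
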